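/- Let 1 ≤ k ≤ n and let A_1, …, A_ℓ ⊆ [n] be subsets each of size at most k. Consider the linear program: minimize k − Σ_{i=1}^ℓ δ_i over real numbers δ_1, …, δ_ℓ ≥ 0 subject to Σ_{i∈I} δ_i ≤ k − |A_I| for every nonempty I ⊆ [ℓ]. Then the optimal value of this linear program equals max over all partitions P_1 ⊔ ⋯ ⊔ P_s = [ℓ] into nonempty parts of (Σ_{i=1}^s |A_{P_i}| − (s−1)·k), i.e., it equals the k-dimensional generic intersection dimension of A_1, …, A_ℓ; in particular the optimum is attained at an integral point. -/

import Mathlib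

/-!
Weak duality: summing the constraints over the parts of a partition `P` shows
`partVal k A P ≤ k - ∑ i, δ i` for every feasible `δ`. For the converse, write the constraints
as `∑ i ∈ I, δ i ≤ f I` with `f I = k - |A_I|`; since `I ↦ |A_I|` is supermodular, `f` is
submodular, so the union of two intersecting tight sets is again tight. An integral feasible `δ`
of maximal total weight puts every index in some tight set (otherwise that coordinate could be
raised by one), hence the maximal tight sets partition `[ℓ]`, and summing the tight constraints
over this partition gives equality.
-/

open Finset

/-- The value `Σ_{p ∈ P} |∩_{j ∈ p} A_j| − (s − 1)·k` associated to a partition `P`. -/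
def partVal {ℓ n : ℕ} (k : ℕ) (A : Fin ℓ → Finset (Fin n))
    (P : Finpartition (Finset.univ : Finset (Fin ℓ))) : ℤ :=
  (∑ p ∈ P.parts, ((p.inf A).card : ℤ)) - ((P.parts.card : ℤ) - 1) * k

lemma Finpartition.sum_sum_parts {α M : Type*} [DecidableEq α] [AddCommMonoid M]
    {s : Finset α} (P : Finpartition s) (g : α → M) :
    ∑ p ∈ P.parts, ∑ x ∈ p, g x = ∑ x ∈ s, g x := by
  simpa [P.biUnion_parts] using (sum_biUnion P.disjoint (f := g)).symm

lemma card_inf_add_card_inf_le {ι α : Type*} [DecidableEq ι] [DecidableEq α] [Fintype α]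
    (A : ι → Finset α) (X Y : Finset ι) :
    #(X.inf A) + #(Y.inf A) ≤ #((X ∪ Y).inf A) + #((X ∩ Y).inf A) := by
  have hunion : X.inf A ∩ Y.inf A = (X ∪ Y).inf A := inf_union.symm
  have hinter : X.inf A ∪ Y.inf A ⊆ (X ∩ Y).inf A :=
    union_subset (inf_mono inter_subset_left) (inf_mono inter_subset_right)
  rw [← card_union_add_card_inter, add_comm, hunion]
  gcongr

namespace SetFunction

variable {ι : Type*} [DecidableEq ι] (f : Finset ι → ℤ) (x : ι → ℤ)

def IntersectingSubmodular : Prop :=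
  ∀ X Y : Finset ι, (X ∩ Y).Nonempty → f (X ∪ Y) + f (X ∩ Y) ≤ f X + f Y

def IsFeasible : Prop := ∀ I : Finset ι, I.Nonempty → ∑ i ∈ I, x i ≤ f I

def IsTight (T : Finset ι) : Prop := ∑ i ∈ T, x i = f T

variable {f x}

lemma IsTight.union (hx : IsFeasible f x)
    (hf : IntersectingSubmodular f)
    {X Y : Finset ι} (hX : IsTight f x X) (hY : IsTight f x Y) (hXY : (X ∩ Y).Nonempty) :
    IsTight f x (X ∪ Y) := by
  have hunion := hx (X ∪ Y) ((hXY.mono inter_subset_left).mono subset_union_left)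
  have hinter := hx _ hXY
  have := sum_union_inter (s₁ := X) (s₂ := Y) (f := x)
  unfold IsTight at *
  linarith [hf X Y hXY]

lemma exists_isGreatest_isTight [Fintype ι] (hx : IsFeasible f x)
    (hf : IntersectingSubmodular f)
    {i : ι} (hi : ∃ T, i ∈ T ∧ IsTight f x T) :
    ∃ M, IsGreatest {T | i ∈ T ∧ IsTight f x T} M := by
  classical
  obtain ⟨T, hT⟩ := hi
  obtain ⟨M, hM, hMmax⟩ := exists_max_image (univ.filter fun T => i ∈ T ∧ IsTight f x T) card
    ⟨T, by simpa using hT⟩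
  simp only [mem_filter, mem_univ, true_and] at hM hMmax
  refine ⟨M, hM, fun T ⟨hiT, hT⟩ => ?_⟩
  have hMT := hM.2.union hx hf hT ⟨i, mem_inter.2 ⟨hM.1, hiT⟩⟩
  rw [eq_of_subset_of_card_le subset_union_left (hMmax _ ⟨mem_union_left _ hM.1, hMT⟩)]
  exact subset_union_right

lemma exists_finpartition_forall_isTight [Fintype ι] (hx : IsFeasible f x)
    (hf : IntersectingSubmodular f)
    (hcover : ∀ i, ∃ T, i ∈ T ∧ IsTight f x T) :
    ∃ P : Finpartition (univ : Finset ι), ∀ p ∈ P.parts, IsTight f x p := by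
  classical
  choose M hM using fun i => exists_isGreatest_isTight hx hf (hcover i)
  have hsubset {i j : ι} (hj : j ∈ M i) : M i ⊆ M j := (hM j).2 ⟨hj, (hM i).1.2⟩
  let s : Setoid ι :=
    ⟨fun i j => j ∈ M i, ⟨fun i => (hM i).1.1, fun hj => hsubset hj (hM _).1.1,
      fun hj hl => hsubset (hsubset hj (hM _).1.1) hl⟩⟩
  refine ⟨Finpartition.ofSetoid s, fun p hp => ?_⟩
  simp only [Finpartition.ofSetoid, Finpartition.ofSetSetoid_parts, mem_image] at hp
  obtain ⟨i, -, rfl⟩ := hp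
  convert (hM i).1.2
  ext j
  simp only [mem_filter, mem_univ, true_and]
  rfl

lemma exists_isFeasible_forall_exists_isTight [Fintype ι]
    (hf₀ : ∀ I : Finset ι, I.Nonempty → 0 ≤ f I) :
    ∃ δ : ι → ℕ, IsFeasible f (δ ·) ∧ ∀ i, ∃ T, i ∈ T ∧ IsTight f (δ ·) T := by
  classical
  have hbound {δ : ι → ℕ} (hδ : IsFeasible f (δ ·)) (i : ι) : δ i < (f {i}).toNat + 1 := by
    have := hδ {i} (singleton_nonempty i)
    rw [sum_singleton] at this
    omega
  set F := (Fintype.piFinset fun i => range ((f {i}).toNat + 1)).filter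
    fun δ : ι → ℕ => IsFeasible f (δ ·)
  have hmemF {δ : ι → ℕ} : δ ∈ F ↔ IsFeasible f (δ ·) := by
    simpa [F] using fun hδ i => hbound hδ i
  obtain ⟨δ, hδ, hδmax⟩ := exists_max_image F (fun δ => ∑ i, δ i)
    ⟨0, hmemF.2 fun I hI => by simpa using hf₀ I hI⟩
  rw [hmemF] at hδ
  refine ⟨δ, hδ, fun i => ?_⟩
  by_contra! hslack
  -- raising `δ i` by one keeps `δ` feasible, since every constraint involving `i` is slack
  set δ' : ι → ℕ := fun j => δ j + if j = i then 1 else 0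
  have hsum (I : Finset ι) :
      ∑ j ∈ I, (δ' j : ℤ) = ∑ j ∈ I, (δ j : ℤ) + if i ∈ I then 1 else 0 := by
    simp [δ', sum_add_distrib]
  have hδ' : IsFeasible f (δ' ·) := by
    intro I hI
    rw [hsum]
    split_ifs with hiI
    · have hfeas := hδ I hI
      have htight := hslack I hiI
      unfold IsTight at htight
      dsimp only at hfeas htight
      omega
    · simpa using hδ I hI
  have hle : ∑ j, (δ' j : ℤ) ≤ ∑ j, (δ j : ℤ) := by exact_mod_cast hδmax δ' (hmemF.2 hδ')
  rw [hsum, if_pos (mem_univ i)] at hle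
  omega

theorem exists_isFeasible_finpartition_forall_isTight [Fintype ι]
    (hf₀ : ∀ I : Finset ι, I.Nonempty → 0 ≤ f I)
    (hf : IntersectingSubmodular f) :
    ∃ (δ : ι → ℕ) (P : Finpartition (univ : Finset ι)),
      IsFeasible f (δ ·) ∧ ∀ p ∈ P.parts, IsTight f (δ ·) p := by
  obtain ⟨δ, hδ, hcover⟩ := exists_isFeasible_forall_exists_isTight hf₀
  obtain ⟨P, hP⟩ := exists_finpartition_forall_isTight hδ hf hcover
  exact ⟨δ, P, hδ, hP⟩

end SetFunction

section PartVal

variable {ℓ n : ℕ} (k : ℕ) (A : Fin ℓ → Finset (Fin n))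

lemma partVal_eq_sub_sum (P : Finpartition (univ : Finset (Fin ℓ))) :
    partVal k A P = k - ∑ p ∈ P.parts, ((k : ℤ) - #(p.inf A)) := by
  rw [partVal, sum_sub_distrib, sum_const, nsmul_eq_mul]
  ring

lemma partVal_le_sub_sum {R : Type*} [Ring R] [PartialOrder R] [IsOrderedAddMonoid R]
    {ε : Fin ℓ → R} (hε : ∀ I : Finset (Fin ℓ), I.Nonempty → ∑ i ∈ I, ε i ≤ (k : R) - #(I.inf A))
    (P : Finpartition (univ : Finset (Fin ℓ))) :
    (partVal k A P : R) ≤ k - ∑ i, ε i := by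
  rw [partVal_eq_sub_sum, ← P.sum_sum_parts]
  push_cast
  gcongr with p hp
  exact hε p (P.nonempty_of_mem_parts hp)

end PartVal

theorem lp_value_eq_generic_intersection_dim_general (n k ℓ : ℕ)
    (A : Fin ℓ → Finset (Fin n)) (hA : ∀ i, (A i).card ≤ k)
    (D : ℤ)
    (hD : IsGreatest
      {v : ℤ | ∃ P : Finpartition (Finset.univ : Finset (Fin ℓ)), v = partVal k A P} D) :
    IsLeast
      {v : ℝ | ∃ δ : Fin ℓ → ℝ, (∀ i, 0 ≤ δ i) ∧
        (∀ I : Finset (Fin ℓ), I.Nonempty →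
          ∑ i ∈ I, δ i ≤ (k : ℝ) - ((I.inf A).card : ℝ)) ∧
        v = (k : ℝ) - ∑ i, δ i} (D : ℝ) ∧
    ∃ δ : Fin ℓ → ℕ,
      (∀ I : Finset (Fin ℓ), I.Nonempty →
        (∑ i ∈ I, (δ i : ℤ)) ≤ (k : ℤ) - ((I.inf A).card : ℤ)) ∧
      (k : ℤ) - ∑ i, (δ i : ℤ) = D := by
  obtain ⟨⟨P₀, rfl⟩, hP₀⟩ := hD
  have hf₀ (I : Finset (Fin ℓ)) (hI : I.Nonempty) : (0 : ℤ) ≤ k - #(I.inf A) := by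
    obtain ⟨i, hi⟩ := hI
    have := (card_le_card (inf_le hi)).trans (hA i)
    omega
  have hf : SetFunction.IntersectingSubmodular fun I : Finset (Fin ℓ) => (k : ℤ) - #(I.inf A) :=
    fun X Y _ => by
      have := card_inf_add_card_inf_le A X Y
      dsimp only
      omega
  obtain ⟨δ, P, hδ, hP⟩ := SetFunction.exists_isFeasible_finpartition_forall_isTight hf₀ hf
  have hval : (k : ℤ) - ∑ i, (δ i : ℤ) = partVal k A P := by
    rw [partVal_eq_sub_sum, ← P.sum_sum_parts, sum_congr rfl hP]
  have hopt : (k : ℤ) - ∑ i, (δ i : ℤ) = partVal k A P₀ :=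
    le_antisymm (hval ▸ hP₀ ⟨P, rfl⟩) (partVal_le_sub_sum k A hδ P₀)
  refine ⟨⟨⟨fun i => δ i, fun i => by positivity,
    fun I hI => by simpa using (Int.cast_le (R := ℝ)).2 (hδ I hI),
    by simpa using congrArg (Int.cast (R := ℝ)) hopt.symm⟩, ?_⟩, δ, hδ, hopt⟩
  rintro v ⟨ε, -, hε, rfl⟩
  exact partVal_le_sub_sum k A hε P₀

theorem lp_value_eq_generic_intersection_dim (n k ℓ : ℕ)
    (hk : 1 ≤ k) (hkn : k ≤ n)
    (A : Fin ℓ → Finset (Fin n)) (hA : ∀ i, (A i).card ≤ k)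
    (D : ℤ)
    (hD : IsGreatest
      {v : ℤ | ∃ P : Finpartition (Finset.univ : Finset (Fin ℓ)), v = partVal k A P} D) :
    IsLeast
      {v : ℝ | ∃ δ : Fin ℓ → ℝ, (∀ i, 0 ≤ δ i) ∧
        (∀ I : Finset (Fin ℓ), I.Nonempty →
          ∑ i ∈ I, δ i ≤ (k : ℝ) - ((I.inf A).card : ℝ)) ∧
        v = (k : ℝ) - ∑ i, δ i} (D : ℝ) ∧
    ∃ δ : Fin ℓ → ℕ,
      (∀ I : Finset (Fin ℓ), I.Nonempty →
        (∑ i ∈ I, (δ i : ℤ)) ≤ (k : ℤ) - ((I.inf A).card : ℤ)) ∧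
      (k : ℤ) - ∑ i, (δ i : ℤ) = D :=
  lp_value_eq_generic_intersection_dim_general n k ℓ A hA D hD
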